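/- Let H be a real Hilbert space, μ a nonatomic Borel probability measure on H, and u ∈ H with ‖u‖ < 1. If Q* minimizes g(Q) = E[‖Q − X‖ − ‖X‖] − ⟨u, Q⟩ over H, and E[1/‖Q* − X‖] < ∞, then Q* satisfies the first-order condition E[(Q* − X)/‖Q* − X‖] = u, i.e., the spatial distribution at Q* equals u. -/

import Mathlib

/-!
At a minimiser the Fréchet derivative of `g` vanishes. Since `μ` has no atom at `Q*`, for
`μ`-almost every `x` the map `Q ↦ ‖Q - x‖` is differentiable at `Q*` with gradient the spatial
sign of `Q* - x`; these maps are `1`-Lipschitz, so dominated convergence lets us differentiate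
under the integral, and the gradient of `Q ↦ E[‖Q - X‖ - ‖X‖]` at `Q*` is the spatial
distribution `E[(Q* - X)/‖Q* - X‖]`. Equating it with the gradient `u` of `⟨u, ·⟩` gives the claim.
-/

open MeasureTheory Filter

section SpatialSign

variable {E : Type*} [NormedAddCommGroup E] [InnerProductSpace ℝ E]

noncomputable def spatialSign (v : E) : E := ‖v‖⁻¹ • v

theorem norm_spatialSign_le_one (v : E) : ‖spatialSign v‖ ≤ 1 := by
  rcases eq_or_ne v 0 with rfl | hv
  · simp [spatialSign]
  · exact (norm_smul_inv_norm (𝕜 := ℝ) hv).le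

theorem measurable_spatialSign [MeasurableSpace E] [BorelSpace E] [SecondCountableTopology E] :
    Measurable (spatialSign : E → E) :=
  measurable_norm.inv.smul measurable_id

theorem hasFDerivAt_norm {y : E} (hy : y ≠ 0) :
    HasFDerivAt (‖·‖) (innerSL ℝ (spatialSign y)) y := by
  have hy' : ‖y‖ ≠ 0 := norm_ne_zero_iff.2 hy
  have hsqrt := (hasStrictFDerivAt_norm_sq y).hasFDerivAt.sqrt (pow_ne_zero 2 hy')
  simp only [Real.sqrt_sq (norm_nonneg _)] at hsqrt
  refine hsqrt.congr_fderiv ?_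
  ext v
  simp [spatialSign]
  field_simp

theorem hasFDerivAt_integral_norm_sub_sub_norm [CompleteSpace E] [MeasurableSpace E]
    [BorelSpace E] [SecondCountableTopology E] (μ : Measure E) [IsFiniteMeasure μ] {Q : E}
    (hQ : μ {Q} = 0) :
    HasFDerivAt (fun P ↦ ∫ x, (‖P - x‖ - ‖x‖) ∂μ) (innerSL ℝ (∫ x, spatialSign (Q - x) ∂μ)) Q := by
  have hsign_meas : AEStronglyMeasurable (fun x ↦ spatialSign (Q - x)) μ :=
    (measurable_spatialSign.comp (measurable_const.sub measurable_id)).aestronglyMeasurable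
  have hsign_int : Integrable (fun x ↦ spatialSign (Q - x)) μ :=
    .of_bound hsign_meas 1 (.of_forall fun x ↦ norm_spatialSign_le_one _)
  have hdiff : ∀ᵐ x ∂μ, HasFDerivAt (fun P ↦ ‖P - x‖ - ‖x‖) (innerSL ℝ (spatialSign (Q - x))) Q :=
    (measure_eq_zero_iff_ae_notMem.1 hQ).mono fun x hx ↦ by
      have hne : Q - x ≠ 0 := sub_ne_zero.2 (Ne.symm hx)
      simpa using ((hasFDerivAt_norm hne).comp Q ((hasFDerivAt_id Q).sub_const x)).sub_const ‖x‖
  have hmeas : ∀ P : E, AEStronglyMeasurable (fun x ↦ ‖P - x‖ - ‖x‖) μ := fun P ↦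
    ((continuous_const.sub continuous_id).norm.sub continuous_norm).aestronglyMeasurable
  have hlip : ∀ x P : E, ‖(‖P - x‖ - ‖x‖) - (‖Q - x‖ - ‖x‖)‖ ≤ 1 * ‖P - Q‖ := fun x P ↦ by
    simpa using abs_norm_sub_norm_le (P - x) (Q - x)
  obtain ⟨-, hderiv⟩ := hasFDerivAt_integral_of_dominated_loc_of_lip' univ_mem
    (fun P _ ↦ hmeas P)
    (.of_bound (hmeas Q) ‖Q‖ (.of_forall fun x ↦ by simpa [abs_sub_comm] using hlip x 0))
    ((innerSL ℝ).continuous.comp_aestronglyMeasurable hsign_meas)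
    (.of_forall fun x P _ ↦ hlip x P) (integrable_const 1) hdiff
  rwa [ContinuousLinearMap.integral_comp_commSL (by simp) (innerSL ℝ) hsign_int] at hderiv

end SpatialSign

theorem spatial_quantile_first_order_condition_general {H : Type*} [NormedAddCommGroup H]
    [InnerProductSpace ℝ H] [CompleteSpace H] [MeasurableSpace H] [BorelSpace H]
    [SecondCountableTopology H] (μ : Measure H) [IsProbabilityMeasure μ]
    (hna : ∀ x : H, μ {x} = 0)
    (u : H)
    (g : H → ℝ)
    (hg : ∀ Q, g Q = (∫ x, (‖Q - x‖ - ‖x‖) ∂μ) - @inner ℝ H _ u Q)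
    (Qstar : H) (hmin : IsMinOn g Set.univ Qstar) :
    (∫ x, ‖Qstar - x‖⁻¹ • (Qstar - x) ∂μ) = u := by
  have hderiv :
      HasFDerivAt g (innerSL ℝ (∫ x, spatialSign (Qstar - x) ∂μ) - innerSL ℝ u) Qstar := by
    rw [funext hg]
    exact (hasFDerivAt_integral_norm_sub_sub_norm μ (hna Qstar)).sub (innerSL ℝ u).hasFDerivAt
  have hcrit := (hmin.isLocalMin univ_mem).hasFDerivAt_eq_zero hderiv
  exact innerSL_inj.1 (sub_eq_zero.1 hcrit)

/-- First-order condition for the spatial `u`-quantile: if `Q*` minimizes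
`g(Q) = E[‖Q − X‖ − ‖X‖] − ⟨u, Q⟩` over a Hilbert space, `μ` is nonatomic and
`E[1/‖Q* − X‖] < ∞`, then the spatial distribution at `Q*` equals `u`. -/
theorem spatial_quantile_first_order_condition {H : Type*} [NormedAddCommGroup H]
    [InnerProductSpace ℝ H] [CompleteSpace H] [MeasurableSpace H] [BorelSpace H]
    [SecondCountableTopology H] (μ : Measure H) [IsProbabilityMeasure μ]
    (hna : ∀ x : H, μ {x} = 0)
    (u : H) (hu : ‖u‖ < 1)
    (g : H → ℝ)
    (hg : ∀ Q, g Q = (∫ x, (‖Q - x‖ - ‖x‖) ∂μ) - @inner ℝ H _ u Q)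
    (Qstar : H) (hmin : IsMinOn g Set.univ Qstar)
    (hint : Integrable (fun x => ‖Qstar - x‖⁻¹) μ) :
    (∫ x, ‖Qstar - x‖⁻¹ • (Qstar - x) ∂μ) = u :=
  spatial_quantile_first_order_condition_general μ hna u g hg Qstar hmin
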